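/- arXiv:2005.03874 — 2 statements merged into one kernel-verified Lean document; each statement's English description precedes it below -/
import Mathlib

section
/- (Alzer–Kwong) For every positive integer m, every natural number ν with 0 ≤ ν ≤ m, and every rational x, one has ∑_{k=0, k+m odd}^{m-1} C(m,k)·C(k+m,ν)·B_{k+m−ν}(x) = (1/2)·∑_{j=0}^{m} (−1)^{j+m}·C(m,j)·C(j+m−1,ν)·(j+m)·x^{j+m−ν−1}, where the sum on the left runs only over those indices k in {0,…,m−1} for which k+m is odd. -/
/-!
Both sides of `X ^ m * (X + 1) ^ m = ∑ₖ C(m,k) X^(k+m) = ∑ⱼ (-1)^(j+m) C(m,j) (X + 1)^(j+m)`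
are pushed through the umbral substitution `X ^ n ↦ Bₙ(X)`, which is linear and sends
`(X + 1) ^ n` to `Bₙ(X + 1) = Bₙ(X) + n X^(n-1)`. The `ν`-th Hasse derivative sends `Bₙ` to
`C(n,ν) B_(n-ν)`; evaluating at `x` and comparing the resulting identity with its
sign-twisted copy `∑ₖ (-1)^(k+m) C(m,k) C(k+m,ν) B_(k+m-ν)(x)` isolates the terms with `k + m` odd.
-/

open Finset Polynomial

theorem sum_choose_nsmul_pow_add {R : Type*} [CommSemiring R] (y : R) (m : ℕ) :
    ∑ k ∈ range (m + 1), m.choose k • y ^ (k + m) = y ^ m * (y + 1) ^ m := by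
  rw [add_pow, mul_sum]
  refine sum_congr rfl fun k _ => ?_
  rw [nsmul_eq_mul, pow_add, one_pow, mul_one]
  ring

theorem sum_neg_one_pow_choose_zsmul_add_one_pow {R : Type*} [CommRing R] (y : R) (m : ℕ) :
    ∑ j ∈ range (m + 1), ((-1) ^ (j + m) * m.choose j : ℤ) • (y + 1) ^ (j + m) =
      y ^ m * (y + 1) ^ m := by
  conv_rhs => rw [← add_sub_cancel_right y 1, sub_pow, sum_mul, add_sub_cancel_right]
  refine sum_congr rfl fun j _ => ?_
  rw [zsmul_eq_mul, pow_add, one_pow, mul_one]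
  push_cast
  ring

theorem sum_filter_odd_eq {ι K : Type*} [Field K] [CharZero K] (s : Finset ι) (n : ι → ℕ)
    (f : ι → K) :
    ∑ i ∈ s with Odd (n i), f i = 2⁻¹ * ∑ i ∈ s, (1 - (-1) ^ n i) * f i := by
  rw [sum_filter, mul_sum]
  refine sum_congr rfl fun i _ => ?_
  rcases Nat.even_or_odd (n i) with h | h
  · rw [if_neg (Nat.not_odd_iff_even.mpr h), h.neg_one_pow]
    ring
  · rw [if_pos h, h.neg_one_pow]
    ring

namespace Polynomial

theorem iterate_derivative_bernoulli (k n : ℕ) :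
    derivative^[k] (bernoulli n) = n.descFactorial k • bernoulli (n - k) := by
  induction k with
  | zero => simp
  | succ k ih =>
    rw [Function.iterate_succ_apply', ih, derivative_smul, derivative_bernoulli, ← nsmul_eq_mul,
      smul_smul, Nat.descFactorial_succ, Nat.sub_sub, mul_comm]

theorem hasseDeriv_bernoulli (k n : ℕ) :
    hasseDeriv k (bernoulli n) = n.choose k • bernoulli (n - k) := by
  apply smul_right_injective ℚ[X] (Nat.factorial_ne_zero k)
  have h := congrFun (factorial_smul_hasseDeriv (R := ℚ) (k := k)) (bernoulli n)
  simp only [LinearMap.smul_apply] at h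
  dsimp only
  rw [h, iterate_derivative_bernoulli, Nat.descFactorial_eq_factorial_mul_choose, mul_smul]

theorem hasseDeriv_X_pow {R : Type*} [Semiring R] (k n : ℕ) :
    hasseDeriv k (X ^ n : R[X]) = n.choose k • X ^ (n - k) := by
  rw [X_pow_eq_monomial, hasseDeriv_monomial, X_pow_eq_monomial, smul_monomial, mul_one,
    nsmul_eq_mul, mul_one]

/-- The umbral substitution `X ^ n ↦ Bₙ(X)`. -/
noncomputable def bernoulliUmbral : ℚ[X] →ₗ[ℚ] ℚ[X] :=
  lsum fun n => LinearMap.id.smulRight (bernoulli n)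

theorem bernoulliUmbral_X_pow (n : ℕ) : bernoulliUmbral (X ^ n) = bernoulli n := by
  simp [bernoulliUmbral, X_pow_eq_monomial, sum_monomial_index]

theorem bernoulliUmbral_X_add_one_pow (n : ℕ) :
    bernoulliUmbral ((X + 1) ^ n) = bernoulli n + n • X ^ (n - 1) := by
  rw [add_pow, map_sum]
  simp only [one_pow, mul_one, mul_comm _ (Nat.cast _), ← nsmul_eq_mul, map_nsmul,
    bernoulliUmbral_X_pow]
  cases n with
  | zero => simp
  | succ n =>
    rw [sum_range_succ, Nat.choose_self, one_smul, add_comm]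
    simp only [← Nat.cast_smul_eq_nsmul ℚ, sum_bernoulli, add_tsub_cancel_right]
    rw [smul_X_eq_monomial]
    push_cast
    rfl

theorem sum_choose_nsmul_bernoulli_add (m : ℕ) :
    ∑ k ∈ range (m + 1), m.choose k • bernoulli (k + m) =
      ∑ j ∈ range (m + 1), ((-1) ^ (j + m) * m.choose j : ℤ) •
        (bernoulli (j + m) + (j + m) • X ^ (j + m - 1)) := by
  have h := congrArg bernoulliUmbral <|
    (sum_choose_nsmul_pow_add (X : ℚ[X]) m).trans
      (sum_neg_one_pow_choose_zsmul_add_one_pow X m).symm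
  simpa only [map_sum, map_nsmul, map_zsmul, bernoulliUmbral_X_pow,
    bernoulliUmbral_X_add_one_pow] using h

theorem sum_choose_mul_choose_mul_eval_bernoulli (m ν : ℕ) (x : ℚ) :
    ∑ k ∈ range (m + 1), (m.choose k : ℚ) * (k + m).choose ν * (bernoulli (k + m - ν)).eval x =
      ∑ j ∈ range (m + 1), (-1) ^ (j + m) * m.choose j *
        ((j + m).choose ν * (bernoulli (j + m - ν)).eval x +
          (j + m - 1).choose ν * (j + m) * x ^ (j + m - ν - 1)) := by
  have h := congrArg (fun p => (hasseDeriv ν p).eval x) (sum_choose_nsmul_bernoulli_add m)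
  simp only [map_sum, map_nsmul, map_zsmul, map_add, hasseDeriv_bernoulli, hasseDeriv_X_pow,
    eval_finsetSum, eval_smul, eval_add, eval_pow, eval_X] at h
  simp only [nsmul_eq_mul, zsmul_eq_mul, Nat.sub_right_comm _ 1 ν] at h
  push_cast at h
  refine (sum_congr rfl fun k _ => by ring).trans (h.trans (sum_congr rfl fun j _ => by ring))

end Polynomial

theorem alzer_kwong_general (m : ℕ) (ν : ℕ) (x : ℚ) :
    ∑ k ∈ (Finset.range m).filter (fun k => Odd (k + m)),
      (m.choose k : ℚ) * ((k + m).choose ν) * (Polynomial.bernoulli (k + m - ν)).eval x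
    = (1 / 2) * ∑ j ∈ Finset.range (m + 1),
        (-1 : ℚ) ^ (j + m) * (m.choose j) * ((j + m - 1).choose ν) * (j + m) *
          x ^ (j + m - ν - 1) := by
  have hfilter : (range (m + 1)).filter (fun k => Odd (k + m)) =
      (range m).filter (fun k => Odd (k + m)) := by
    rw [range_add_one, filter_insert, if_neg (by simp)]
  rw [← hfilter, sum_filter_odd_eq, one_div]
  congr 1
  simp only [sub_mul, one_mul, sum_sub_distrib, sum_choose_mul_choose_mul_eval_bernoulli]
  rw [← sum_sub_distrib]
  refine sum_congr rfl fun j _ => ?_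
  ring

theorem alzer_kwong (m : ℕ) (hm : 0 < m) (ν : ℕ) (hν : ν ≤ m) (x : ℚ) :
    ∑ k ∈ (Finset.range m).filter (fun k => Odd (k + m)),
      (m.choose k : ℚ) * ((k + m).choose ν) * (Polynomial.bernoulli (k + m - ν)).eval x
    = (1 / 2) * ∑ j ∈ Finset.range (m + 1),
        (-1 : ℚ) ^ (j + m) * (m.choose j) * ((j + m - 1).choose ν) * (j + m) *
          x ^ (j + m - ν - 1) :=
  alzer_kwong_general m ν x
end

section
/- (Alzer–Kwong) For every positive integer m and natural numbers ν, ℓ with 0 ≤ ν ≤ m and 0 ≤ ℓ ≤ m−1, one has ∑_{k=ℓ, k+m odd}^{m-1} C(m,k)·C(k+m,ν)·C(k+m−ν, ℓ+m−ν)·B_{k−ℓ} = (−1)^{ℓ+m+1}·((ℓ+m+1)/2)·C(m, ℓ+1)·C(ℓ+m, ν), where the sum runs only over those indices k in {ℓ,…,m−1} for which k+m is odd. -/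
/-!
Put `k = ℓ + j` and `a j = C(m, ℓ + j) * C(ℓ + m + j, j)`. Since
`C(k + m, ν) * C(k + m - ν, ℓ + m - ν) = C(k + m, ℓ + m) * C(ℓ + m, ν)`, the sum is
`C(ℓ + m, ν)` times the sum of `a j * B j` over `j < m - ℓ` with `ℓ + m + j` odd.

The odd Bernoulli numbers beyond `B 1` vanish, so when `ℓ + m` is even only `j = 1` survives.
When `ℓ + m` is odd, so is `N = m - ℓ`, and Chu–Vandermonde at a negative upper index shows
that `a` is an eigenvector, with eigenvalue `(-1) ^ N = -1`, of the alternating binomial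
transform `T a = (i ↦ ∑ j ≤ N, (-1) ^ j * C(j, i) * a j)`. Since
`∑ i ≤ j, C(j, i) * B i = B' j = (-1) ^ j * B j`, swapping the order of summation gives
`∑ i ≤ N, (T a) i * B i = ∑ j ≤ N, a j * B j`, so this sum is `0`; hence the terms with `j`
even sum to minus the `j = 1` term.
-/

open Finset

section ChuVandermonde

variable {K : Type*} [Field K] [CharZero K]

theorem Ring.choose_neg_natCast_add_one (a k : ℕ) :
    Ring.choose (-(a + 1 : K)) k = (-1) ^ k * (a + k).choose k := by
  rw [Ring.choose_neg, Units.smul_def,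
    show (a : K) + 1 + k - 1 = ((a + k : ℕ) : K) by push_cast; ring,
    Ring.choose_natCast, zsmul_eq_mul, Int.cast_negOnePow, zpow_natCast]

theorem sum_range_neg_one_pow_mul_choose_add_mul_choose {a b : ℕ} (hba : b ≤ a) (n : ℕ) :
    ∑ s ∈ range (n + 1), (-1 : K) ^ s * (a + s).choose s * b.choose (n - s) =
      (-1) ^ n * (a - b + n).choose n := by
  have h := Ring.add_choose_eq (r := -(a + 1 : K)) (s := (b : K)) n (Commute.all _ _)
  rw [show -(a + 1 : K) + b = -((a - b : ℕ) + 1) by push_cast [hba]; ring,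
    Nat.sum_antidiagonal_eq_sum_range_succ
      (fun i j => Ring.choose (-(a + 1 : K)) i * Ring.choose (b : K) j)] at h
  simp only [Ring.choose_neg_natCast_add_one, Ring.choose_natCast] at h
  rw [h]

end ChuVandermonde

theorem sum_range_choose_mul_bernoulli {j N : ℕ} (hjN : j ≤ N) :
    ∑ i ∈ range (N + 1), (j.choose i : ℚ) * bernoulli i = bernoulli' j := by
  rw [← sum_subset (range_subset_range.2 (Nat.succ_le_succ hjN)) fun i _ hi => by
      rw [Nat.choose_eq_zero_of_lt (by simpa using hi), Nat.cast_zero, zero_mul],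
    sum_range_succ, sum_bernoulli, Nat.choose_self, Nat.cast_one, one_mul]
  rcases eq_or_ne j 1 with rfl | hj
  · norm_num [bernoulli_one, bernoulli'_one]
  · rw [if_neg hj, zero_add, bernoulli_eq_bernoulli'_of_ne_one hj]

theorem sum_range_mul_bernoulli_eq_zero {N : ℕ} (a : ℕ → ℚ)
    (ha : ∀ i ≤ N, ∑ j ∈ range (N + 1), (-1) ^ j * j.choose i * a j = -a i) :
    ∑ j ∈ range (N + 1), a j * bernoulli j = 0 := by
  set U := ∑ j ∈ range (N + 1), a j * bernoulli j
  suffices -U = U by linarith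
  calc -U = ∑ i ∈ range (N + 1),
          bernoulli i * ∑ j ∈ range (N + 1), (-1) ^ j * j.choose i * a j := by
        rw [← sum_neg_distrib]
        refine sum_congr rfl fun i hi => ?_
        rw [ha i (Nat.lt_succ_iff.1 (mem_range.1 hi))]
        ring
    _ = ∑ j ∈ range (N + 1),
          (-1) ^ j * a j * ∑ i ∈ range (N + 1), (j.choose i : ℚ) * bernoulli i := by
        simp only [mul_sum]
        rw [sum_comm]
        exact sum_congr rfl fun _ _ => sum_congr rfl fun _ _ => by ring
    _ = U := by
        refine sum_congr rfl fun j hj => ?_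
        rw [sum_range_choose_mul_bernoulli (Nat.lt_succ_iff.1 (mem_range.1 hj)),
          bernoulli'_eq_bernoulli, ← mul_assoc, mul_right_comm _ _ ((-1 : ℚ) ^ j), ← pow_add,
          Even.neg_one_pow ⟨j, rfl⟩, one_mul]

theorem sum_filter_odd_mul_bernoulli {n : ℕ} (hn : 1 < n) (a : ℕ → ℚ) :
    ∑ j ∈ range n with Odd j, a j * bernoulli j = -a 1 / 2 := by
  rw [sum_eq_single_of_mem 1 (by simp [hn]), bernoulli_one]
  · ring
  · intro j hj hj1
    have hj := (mem_filter.1 hj).2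
    rw [bernoulli_eq_zero_of_odd hj (by obtain ⟨t, rfl⟩ := hj; omega), mul_zero]

theorem sum_range_neg_one_pow_mul_choose_mul_choose_mul_choose {m ℓ i : ℕ} (h : ℓ + i ≤ m) :
    ∑ j ∈ range (m - ℓ + 1),
        (-1 : ℚ) ^ j * j.choose i * (m.choose (ℓ + j) * (ℓ + m + j).choose j) =
      (-1) ^ (m - ℓ) * (m.choose (ℓ + i) * (ℓ + m + i).choose i) := by
  obtain ⟨t, ht⟩ : ∃ t, m - ℓ = i + t := ⟨m - ℓ - i, by omega⟩
  have hm : m = ℓ + i + t := by omega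
  rw [ht, add_assoc, sum_range_add, sum_eq_zero fun j hj => by
    rw [Nat.choose_eq_zero_of_lt (mem_range.1 hj)]; simp, zero_add]
  have hterm : ∀ s ∈ range (t + 1),
      (-1 : ℚ) ^ (i + s) * (i + s).choose i *
          (m.choose (ℓ + (i + s)) * (ℓ + m + (i + s)).choose (i + s)) =
        (-1) ^ i * (ℓ + m + i).choose i *
          ((-1) ^ s * (ℓ + m + i + s).choose s * m.choose (t - s)) := by
    intro s hs
    have hst : s ≤ t := Nat.lt_succ_iff.1 (mem_range.1 hs)
    have hsplit : ((ℓ + m + i + s).choose (i + s) * (i + s).choose s : ℚ) =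
        (ℓ + m + i + s).choose s * (ℓ + m + i).choose i := by
      rw [← Nat.cast_mul, ← Nat.cast_mul, Nat.choose_mul (by omega), Nat.add_sub_cancel,
        Nat.add_sub_cancel]
    rw [Nat.choose_symm_add, Nat.choose_symm_of_eq_add (by omega : m = ℓ + (i + s) + (t - s)),
      ← add_assoc (ℓ + m), pow_add]
    linear_combination (-1 : ℚ) ^ i * (-1) ^ s * m.choose (t - s) * hsplit
  rw [sum_congr rfl hterm, ← mul_sum, sum_range_neg_one_pow_mul_choose_add_mul_choose (by omega),
    show ℓ + m + i - m + t = m by omega, Nat.choose_symm_of_eq_add hm, pow_add]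
  ring

theorem sum_range_choose_mul_choose_mul_bernoulli_eq_zero {m ℓ : ℕ} (hodd : Odd (m - ℓ)) :
    ∑ j ∈ range (m - ℓ + 1), (m.choose (ℓ + j) * (ℓ + m + j).choose j : ℚ) * bernoulli j = 0 :=
  sum_range_mul_bernoulli_eq_zero _ fun i hi => by
    have := hodd.pos
    rw [sum_range_neg_one_pow_mul_choose_mul_choose_mul_choose (by omega), hodd.neg_one_pow,
      neg_one_mul]

theorem sum_filter_odd_choose_mul_choose_mul_bernoulli {m ℓ : ℕ} (h : ℓ < m) :
    ∑ j ∈ range (m - ℓ) with Odd (ℓ + m + j),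
        (m.choose (ℓ + j) * (ℓ + m + j).choose j : ℚ) * bernoulli j =
      (-1) ^ (ℓ + m + 1) * ((ℓ + m + 1) / 2) * m.choose (ℓ + 1) := by
  rcases Nat.even_or_odd (ℓ + m) with hp | hp
  · have hN : 1 < m - ℓ := by
      obtain ⟨r, hr⟩ := hp
      omega
    have hfilter :
        (range (m - ℓ)).filter (fun j => Odd (ℓ + m + j)) = (range (m - ℓ)).filter Odd :=
      filter_congr fun j _ => by rw [Nat.odd_add', iff_true_right hp]
    rw [hfilter, sum_filter_odd_mul_bernoulli hN, Nat.choose_one_right, hp.add_one.neg_one_pow]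
    push_cast
    ring
  · have hN : Odd (m - ℓ) := by
      obtain ⟨r, hr⟩ := hp
      exact ⟨r - ℓ, by omega⟩
    have hfilter : (range (m - ℓ)).filter (fun j => Odd (ℓ + m + j)) =
        (range (m - ℓ + 1)).filter (fun j => ¬Odd j) := by
      rw [range_add_one, filter_insert, if_neg (not_not.2 hN)]
      exact filter_congr fun j _ => by
        rw [Nat.odd_add', iff_false_right (Nat.not_even_iff_odd.2 hp)]
    have hsplit := sum_filter_add_sum_filter_not (range (m - ℓ + 1)) Odd
      (fun j => (m.choose (ℓ + j) * (ℓ + m + j).choose j : ℚ) * bernoulli j)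
    rw [sum_range_choose_mul_choose_mul_bernoulli_eq_zero hN,
      sum_filter_odd_mul_bernoulli (by obtain ⟨r, hr⟩ := hN; omega), Nat.choose_one_right]
      at hsplit
    push_cast at hsplit
    rw [hfilter, hp.add_one.neg_one_pow]
    linear_combination hsplit

theorem alzer_kwong_numbers_4_general (m : ℕ) (ν ℓ : ℕ) (hν : ν ≤ m)
    (hℓ : ℓ + 1 ≤ m) :
    ∑ k ∈ (Finset.Ico ℓ m).filter (fun k => Odd (k + m)),
      (m.choose k : ℚ) * ((k + m).choose ν) * ((k + m - ν).choose (ℓ + m - ν)) *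
        bernoulli (k - ℓ)
    = (-1 : ℚ) ^ (ℓ + m + 1) * ((ℓ + m + 1) / 2) * (m.choose (ℓ + 1)) *
        ((ℓ + m).choose ν) := by
  have hchoose (j : ℕ) : ((ℓ + m + j).choose ν * (ℓ + m + j - ν).choose (ℓ + m - ν) : ℚ) =
      (ℓ + m + j).choose j * (ℓ + m).choose ν := by
    rw [← Nat.choose_symm_add]
    exact_mod_cast (Nat.choose_mul (by omega)).symm
  rw [← sum_filter_odd_choose_mul_choose_mul_bernoulli (by omega), sum_filter, sum_filter,
    sum_Ico_eq_sum_range, sum_mul]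
  refine sum_congr rfl fun j _ => ?_
  rw [show ℓ + j + m = ℓ + m + j by omega]
  split_ifs
  · rw [Nat.add_sub_cancel_left, mul_assoc _ ((ℓ + m + j).choose ν : ℚ), hchoose]
    ring
  · simp

theorem alzer_kwong_numbers_4 (m : ℕ) (hm : 0 < m) (ν ℓ : ℕ) (hν : ν ≤ m)
    (hℓ : ℓ + 1 ≤ m) :
    ∑ k ∈ (Finset.Ico ℓ m).filter (fun k => Odd (k + m)),
      (m.choose k : ℚ) * ((k + m).choose ν) * ((k + m - ν).choose (ℓ + m - ν)) *
        bernoulli (k - ℓ)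
    = (-1 : ℚ) ^ (ℓ + m + 1) * ((ℓ + m + 1) / 2) * (m.choose (ℓ + 1)) *
        ((ℓ + m).choose ν) :=
  alzer_kwong_numbers_4_general m ν ℓ hν hℓ
end
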